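/- arXiv:1406.3295 — 4 statements merged into one kernel-verified Lean document; each statement's English description precedes it below -/
import Mathlib

section
/- Let X be an I_1×I_2 real matrix of rank at most R, and let Φ_1 (R×I_1) and Φ_2 (R×I_2) be matrices such that W = Φ_1 X Φ_2^T is invertible. Then X = Z_1 W^† Z_2^T, where Z_1 = X Φ_2^T, Z_2 = (Φ_1 X)^T, and W^† denotes the Moore–Penrose pseudo-inverse (here W^{-1}). -/
/-! Since `rank X ≤ r = rank (C X B) ≤ rank (X B) ≤ rank X`, the columns of `X B` span the column
space of `X`, so `X = X B M` for some `M`. Multiplying by `C` gives `C X = (C X B) M`, which pins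
down `M = (C X B)⁻¹ C X`. -/

open Matrix

namespace Matrix

variable {K : Type*} [Field K] {m n p : Type*} [Fintype n] [Fintype p]

theorem range_mulVecLin_mul_eq_of_rank_le {A : Matrix m n K} {B : Matrix n p K}
    (h : A.rank ≤ (A * B).rank) :
    LinearMap.range (A * B).mulVecLin = LinearMap.range A.mulVecLin := by
  refine Submodule.eq_of_le_of_finrank_le ?_ h
  rw [mulVecLin_mul]
  exact LinearMap.range_comp_le_range _ _

theorem exists_mul_eq_of_range_mulVecLin_le [DecidableEq n] {A : Matrix m n K}
    {C : Matrix m p K} (h : LinearMap.range A.mulVecLin ≤ LinearMap.range C.mulVecLin) :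
    ∃ M : Matrix p n K, C * M = A := by
  choose u hu using fun j : n => h ⟨Pi.single j 1, rfl⟩
  refine ⟨of fun k j => u j k, ext fun i j => ?_⟩
  simp only [mulVecLin_apply, mulVec_single_one] at hu
  exact congrFun (hu j) i

theorem eq_mul_mul_inv_mul_of_rank_le [Fintype m] {r : Type*} [Fintype r] [DecidableEq r]
    [DecidableEq n]
    (X : Matrix m n K) (B : Matrix n r K) (C : Matrix r m K)
    (hrank : X.rank ≤ Fintype.card r) (hW : IsUnit (C * X * B).det) :
    X = X * B * (C * X * B)⁻¹ * (C * X) := by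
  have hWrank : (C * X * B).rank = Fintype.card r :=
    rank_of_isUnit _ ((isUnit_iff_isUnit_det _).2 hW)
  have hXB : X.rank ≤ (X * B).rank :=
    calc X.rank ≤ (C * X * B).rank := hWrank ▸ hrank
      _ ≤ (X * B).rank := by rw [Matrix.mul_assoc]; exact rank_mul_le_right _ _
  obtain ⟨M, hM⟩ := exists_mul_eq_of_range_mulVecLin_le (range_mulVecLin_mul_eq_of_rank_le hXB).ge
  have hWM : C * X * B * M = C * X :=
    calc C * X * B * M = C * (X * B * M) := by simp only [Matrix.mul_assoc]
      _ = C * X := by rw [hM]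
  have hMeq : M = (C * X * B)⁻¹ * (C * X) :=
    calc M = (C * X * B)⁻¹ * (C * X * B) * M := by rw [nonsing_inv_mul _ hW, Matrix.one_mul]
      _ = (C * X * B)⁻¹ * (C * X) := by rw [Matrix.mul_assoc, hWM]
  rw [Matrix.mul_assoc _ _ (C * X), ← hMeq, hM]

end Matrix

/-- exact recovery of a rank-≤R matrix from its two-mode compressive measurements
Z₁ = XΦ₂ᵀ, Z₂ = (Φ₁X)ᵀ and invertible core W = Φ₁XΦ₂ᵀ. -/
theorem exact_matrix_recovery (I1 I2 R : ℕ)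
    (X : Matrix (Fin I1) (Fin I2) ℝ) (hrank : X.rank ≤ R)
    (Φ1 : Matrix (Fin R) (Fin I1) ℝ) (Φ2 : Matrix (Fin R) (Fin I2) ℝ)
    (W : Matrix (Fin R) (Fin R) ℝ) (hWdef : W = Φ1 * X * Φ2ᵀ)
    (hW : IsUnit W.det)
    (Z1 : Matrix (Fin I1) (Fin R) ℝ) (hZ1 : Z1 = X * Φ2ᵀ)
    (Z2 : Matrix (Fin I2) (Fin R) ℝ) (hZ2 : Z2 = (Φ1 * X)ᵀ) :
    X = Z1 * W⁻¹ * Z2ᵀ := by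
  subst hWdef hZ1 hZ2
  rw [transpose_transpose]
  exact eq_mul_mul_inv_mul_of_rank_le X Φ2ᵀ Φ1 (by simpa using hrank) hW
end

section
/- Let X be an I_1×I_2 real matrix of rank R with truncated SVD X = U_1 Λ_1 V_1^T (U_1, V_1 having R orthonormal columns, Λ_1 an invertible diagonal R×R matrix). If the sensing matrices are chosen as Φ_1 = U_1^T and Φ_2 = V_1^T, then the reconstruction X̂ = (X Φ_2^T)(Φ_1 X Φ_2^T)^†(Φ_1 X)^T equals X exactly. -/
/-!
Writing `X = U Λ Vᵀ` with `Uᵀ U = 1 = Vᵀ V`, the orthonormality collapses the sensed data to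
`X V = U Λ`, `Uᵀ X = Λ Vᵀ` and `W = Uᵀ X V = Λ`. Since `Λ` is invertible, the Penrose condition
`W P W = W` forces `P = Λ⁻¹`, and then `(X V) P (Uᵀ X) = U Λ Λ⁻¹ Λ Vᵀ = X`.
-/

open Matrix

namespace Matrix

variable {m n r α : Type*} [Fintype r]

section Semiring

variable [Semiring α]

theorem mul_mul_transpose_mul_of_transpose_mul_self_eq_one [Fintype n] [DecidableEq r]
    (U : Matrix m r α) (Λ : Matrix r r α) {V : Matrix n r α} (hV : Vᵀ * V = 1) :
    U * Λ * Vᵀ * V = U * Λ := by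
  rw [Matrix.mul_assoc, hV, Matrix.mul_one]

theorem transpose_mul_mul_mul_transpose_of_transpose_mul_self_eq_one [Fintype m] [DecidableEq r]
    {U : Matrix m r α} (Λ : Matrix r r α) (V : Matrix n r α) (hU : Uᵀ * U = 1) :
    Uᵀ * (U * Λ * Vᵀ) = Λ * Vᵀ := by
  rw [← Matrix.mul_assoc, ← Matrix.mul_assoc, hU, Matrix.one_mul]

end Semiring

theorem eq_nonsing_inv_of_mul_mul_self_eq_self [DecidableEq r] [CommRing α]
    {A P : Matrix r r α} (hA : IsUnit A.det) (h : A * P * A = A) : P = A⁻¹ := by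
  have hPA : P * A = 1 :=
    ((isUnit_iff_isUnit_det A).mpr hA).mul_left_cancel <| by
      rw [← Matrix.mul_assoc, h, Matrix.mul_one]
  exact (inv_eq_left_inv hPA).symm

end Matrix

theorem optimal_sensing_exact_recovery_general (I1 I2 R : ℕ)
    (X : Matrix (Fin I1) (Fin I2) ℝ)
    (U1 : Matrix (Fin I1) (Fin R) ℝ) (V1 : Matrix (Fin I2) (Fin R) ℝ)
    (Λ1 : Matrix (Fin R) (Fin R) ℝ)
    (hU : U1ᵀ * U1 = 1) (hV : V1ᵀ * V1 = 1)
    (hΛ : IsUnit Λ1.det)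
    (hX : X = U1 * Λ1 * V1ᵀ)
    (Φ1 : Matrix (Fin R) (Fin I1) ℝ) (Φ2 : Matrix (Fin R) (Fin I2) ℝ)
    (hΦ1 : Φ1 = U1ᵀ) (hΦ2 : Φ2 = V1ᵀ)
    (W : Matrix (Fin R) (Fin R) ℝ) (hW : W = Φ1 * X * Φ2ᵀ)
    (P : Matrix (Fin R) (Fin R) ℝ)
    (hP1 : W * P * W = W) :
    (X * Φ2ᵀ) * P * (Φ1 * X) = X := by
  have hXV : X * V1 = U1 * Λ1 := hX ▸ mul_mul_transpose_mul_of_transpose_mul_self_eq_one U1 Λ1 hV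
  have hUX : U1ᵀ * X = Λ1 * V1ᵀ :=
    hX ▸ transpose_mul_mul_mul_transpose_of_transpose_mul_self_eq_one Λ1 V1 hU
  have hWΛ : W = Λ1 := by
    rw [hW, hΦ1, hΦ2, transpose_transpose, hUX, Matrix.mul_assoc, hV, Matrix.mul_one]
  have hP : P = Λ1⁻¹ := eq_nonsing_inv_of_mul_mul_self_eq_self hΛ (hWΛ ▸ hP1)
  rw [hΦ1, hΦ2, transpose_transpose, hXV, hUX, hP, mul_nonsing_inv_cancel_right _ _ hΛ, hX,
    Matrix.mul_assoc]

/-- choosing the sensing matrices from the singular vectors of a rank-R matrix X,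
the reconstruction X̂ = (XΦ₂ᵀ)(Φ₁XΦ₂ᵀ)†(Φ₁X) recovers X exactly.  The Moore–Penrose
pseudo-inverse P of W is characterized by the four Penrose conditions. -/
theorem optimal_sensing_exact_recovery (I1 I2 R : ℕ)
    (X : Matrix (Fin I1) (Fin I2) ℝ) (hrank : X.rank = R)
    (U1 : Matrix (Fin I1) (Fin R) ℝ) (V1 : Matrix (Fin I2) (Fin R) ℝ)
    (Λ1 : Matrix (Fin R) (Fin R) ℝ)
    (hU : U1ᵀ * U1 = 1) (hV : V1ᵀ * V1 = 1)
    (hdiag : Λ1.IsDiag) (hΛ : IsUnit Λ1.det)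
    (hX : X = U1 * Λ1 * V1ᵀ)
    (Φ1 : Matrix (Fin R) (Fin I1) ℝ) (Φ2 : Matrix (Fin R) (Fin I2) ℝ)
    (hΦ1 : Φ1 = U1ᵀ) (hΦ2 : Φ2 = V1ᵀ)
    (W : Matrix (Fin R) (Fin R) ℝ) (hW : W = Φ1 * X * Φ2ᵀ)
    (P : Matrix (Fin R) (Fin R) ℝ)
    (hP1 : W * P * W = W) (hP2 : P * W * P = P)
    (hP3 : (W * P)ᵀ = W * P) (hP4 : (P * W)ᵀ = P * W) :
    (X * Φ2ᵀ) * P * (Φ1 * X) = X :=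
  optimal_sensing_exact_recovery_general I1 I2 R X U1 V1 Λ1 hU hV hΛ hX Φ1 Φ2 hΦ1 hΦ2 W hW P hP1
end

section
/- Let X ∈ R^{I×I}, sensing matrices Φ_1, Φ_2 ∈ R^{R×I} partitioned as Φ_1 = (Φ_{1,1}, Φ_{1,2}), Φ_2 = (Φ_{2,1}, Φ_{2,2}) with Φ_{1,2}, Φ_{2,2} ∈ R^{R×R} and Φ_{1,2} invertible. Define Z_1 = XΦ_2^T with block form Z_1^T = (Z_{1,1}, Z_{1,2}), Z_{1,1} ∈ R^{R×(I−R)}, Z_{1,2} ∈ R^{R×R}, and Z_2 = X^TΦ_1^T. Then Z_{1,2} = (Φ_2 Z_2 − Z_{1,1} Φ_{1,1}^T)(Φ_{1,2}^{-1})^T. -/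
/-!
Both `Φ₂ Z₂` and `Z₁ᵀ Φ₁ᵀ` equal `Φ₂ Xᵀ Φ₁ᵀ`. Expanding `Z₁ᵀ Φ₁ᵀ` blockwise gives
`Z₁₁ Φ₁₁ᵀ + Z₁₂ Φ₁₂ᵀ`, and this linear equation is solved for `Z₁₂` since `Φ₁₂` is invertible.
-/

open Matrix

namespace Matrix

variable {l m n o α : Type*} [CommRing α]

theorem mul_transpose_mul_transpose_eq [Fintype m] [Fintype n]
    (A : Matrix l m α) (X : Matrix n m α) (B : Matrix o n α) :
    A * (Xᵀ * Bᵀ) = (X * Aᵀ)ᵀ * Bᵀ := by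
  rw [transpose_mul, transpose_transpose, Matrix.mul_assoc]

theorem fromCols_mul_transpose_fromCols [Fintype m] [Fintype n]
    (A₁ : Matrix l m α) (A₂ : Matrix l n α) (B₁ : Matrix o m α) (B₂ : Matrix o n α) :
    fromCols A₁ A₂ * (fromCols B₁ B₂)ᵀ = A₁ * B₁ᵀ + A₂ * B₂ᵀ := by
  rw [transpose_fromCols, fromCols_mul_fromRows]

theorem eq_sub_mul_transpose_inv_of_eq_add_mul_transpose [Fintype n] [DecidableEq n]
    {S A B : Matrix m n α} {C : Matrix n n α} (hC : IsUnit C.det) (h : S = A + B * Cᵀ) :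
    B = (S - A) * (C⁻¹)ᵀ := by
  have hCt : IsUnit Cᵀ.det := by rwa [det_transpose]
  rw [h, add_sub_cancel_left, transpose_nonsing_inv, mul_nonsing_inv_cancel_right _ _ hCt]

end Matrix

theorem measurement_redundancy_general (m R : ℕ)
    (X : Matrix (Fin m ⊕ Fin R) (Fin m ⊕ Fin R) ℝ)
    (Φ11 : Matrix (Fin R) (Fin m) ℝ) (Φ12 : Matrix (Fin R) (Fin R) ℝ)
    (hΦ12 : IsUnit Φ12.det)
    (Φ1 Φ2 : Matrix (Fin R) (Fin m ⊕ Fin R) ℝ)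
    (hΦ1 : Φ1 = Matrix.fromCols Φ11 Φ12)
    (Z1 : Matrix (Fin m ⊕ Fin R) (Fin R) ℝ) (hZ1 : Z1 = X * Φ2ᵀ)
    (Z2 : Matrix (Fin m ⊕ Fin R) (Fin R) ℝ) (hZ2 : Z2 = Xᵀ * Φ1ᵀ)
    (Z11 : Matrix (Fin R) (Fin m) ℝ) (Z12 : Matrix (Fin R) (Fin R) ℝ)
    (hblocks : Z1ᵀ = Matrix.fromCols Z11 Z12) :
    Z12 = (Φ2 * Z2 - Z11 * Φ11ᵀ) * (Φ12⁻¹)ᵀ := by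
  have hsplit : Φ2 * Z2 = Z11 * Φ11ᵀ + Z12 * Φ12ᵀ := by
    rw [hZ2, mul_transpose_mul_transpose_eq, ← hZ1, hblocks, hΦ1,
      fromCols_mul_transpose_fromCols]
  exact eq_sub_mul_transpose_inv_of_eq_add_mul_transpose hΦ12 hsplit

/-- redundancy of the measurements — the last R columns of Z₁ᵀ can be computed
from Z₂ and the first I−R columns of Z₁ᵀ via Z₁₂ = (Φ₂Z₂ − Z₁₁Φ₁₁ᵀ)(Φ₁₂⁻¹)ᵀ. -/
theorem measurement_redundancy (m R : ℕ)
    (X : Matrix (Fin m ⊕ Fin R) (Fin m ⊕ Fin R) ℝ)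
    (Φ11 Φ21 : Matrix (Fin R) (Fin m) ℝ) (Φ12 Φ22 : Matrix (Fin R) (Fin R) ℝ)
    (hΦ12 : IsUnit Φ12.det)
    (Φ1 Φ2 : Matrix (Fin R) (Fin m ⊕ Fin R) ℝ)
    (hΦ1 : Φ1 = Matrix.fromCols Φ11 Φ12) (hΦ2 : Φ2 = Matrix.fromCols Φ21 Φ22)
    (Z1 : Matrix (Fin m ⊕ Fin R) (Fin R) ℝ) (hZ1 : Z1 = X * Φ2ᵀ)
    (Z2 : Matrix (Fin m ⊕ Fin R) (Fin R) ℝ) (hZ2 : Z2 = Xᵀ * Φ1ᵀ)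
    (Z11 : Matrix (Fin R) (Fin m) ℝ) (Z12 : Matrix (Fin R) (Fin R) ℝ)
    (hblocks : Z1ᵀ = Matrix.fromCols Z11 Z12) :
    Z12 = (Φ2 * Z2 - Z11 * Φ11ᵀ) * (Φ12⁻¹)ᵀ :=
  measurement_redundancy_general m R X Φ11 Φ12 hΦ12 Φ1 Φ2 hΦ1 Z1 hZ1 Z2 hZ2 Z11 Z12 hblocks
end

section
/- Let W ∈ R^{R_1×R_2×R_3} be a 3rd-order tensor with mode-n unfoldings W_{(n)} and smallest positive singular values σ_{R_1}, σ_{R_2}, σ_{R_3}. If τ > max(σ_{R_1}, σ_{R_2}, σ_{R_3}), then W ×_1 (W_{(1)} W_{(1)}^{*τ}) ×_2 (W_{(2)} W_{(2)}^{*τ}) ×_3 (W_{(3)} W_{(3)}^{*τ}) = W + H with Frobenius norm ‖H‖_F ≤ (√R_1 + √R_2 + √R_3) τ. -/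
/-!
Write `Qₙ = W₍ₙ₎ W₍ₙ₎^{*τ}`. By the SVD, `Qₙ = Uₙ Eₙ Uₙᵀ` with `Eₙ` diagonal with entries in
`{0, 1}`, so `Qₙ` does not increase Frobenius norms, while
`Qₙ W₍ₙ₎ - W₍ₙ₎ = Uₙ (Eₙ Σₙ - Σₙ) Vₙᵀ` only retains the discarded singular values, at most `Rₙ`
of them and each at most `τ`; hence `‖Qₙ W₍ₙ₎ - W₍ₙ₎‖_F ≤ √Rₙ τ`. Since mode products in
different modes commute, the error telescopes as
`W ×₁ Q₁ ×₂ Q₂ ×₃ Q₃ - W = (W ×₁ Q₁ - W) ×₂ Q₂ ×₃ Q₃ + (W ×₂ Q₂ - W) ×₃ Q₃ + (W ×₃ Q₃ - W)`,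
and the triangle inequality together with the nonexpansiveness of `Q₂, Q₃` gives the bound.
-/

open Matrix

lemma Fin.sum_ite_val_eq {M : Type*} [AddCommMonoid M] {p : ℕ} (i : ℕ) (f : ℕ → M) :
    ∑ j : Fin p, (if i = (j : ℕ) then f j else 0) = if i < p then f i else 0 := by
  rw [Fin.sum_univ_eq_sum_range (fun j => if i = j then f j else 0), Finset.sum_ite_eq]
  simp only [Finset.mem_range]

lemma Real.sqrt_le_sqrt_mul_of_le_mul_sq {x c t : ℝ} (ht : 0 ≤ t) (h : x ≤ c * t ^ 2) :
    √x ≤ √c * t := by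
  calc √x ≤ √(c * t ^ 2) := Real.sqrt_le_sqrt h
    _ = √c * t := by rw [Real.sqrt_mul' c (sq_nonneg t), Real.sqrt_sq ht]

noncomputable section

namespace Matrix

section Frobenius

variable {m n : Type*} [Fintype m] [Fintype n]

def frobSq (M : Matrix m n ℝ) : ℝ := ∑ i, ∑ j, M i j ^ 2

lemma frobSq_eq_trace (M : Matrix m n ℝ) : frobSq M = trace (Mᵀ * M) := by
  simp only [frobSq, trace, diag, mul_apply, transpose_apply, sq]
  exact Finset.sum_comm

lemma frobSq_transpose (M : Matrix m n ℝ) : frobSq Mᵀ = frobSq M :=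
  Finset.sum_comm

lemma frobSq_submatrix {m' n' : Type*} [Fintype m'] [Fintype n'] (M : Matrix m n ℝ)
    (e₁ : m' ≃ m) (e₂ : n' ≃ n) : frobSq (M.submatrix e₁ e₂) = frobSq M := by
  simp only [frobSq, submatrix_apply]
  rw [e₁.sum_comp fun i => ∑ j, M i (e₂ j) ^ 2]
  exact Finset.sum_congr rfl fun i _ => e₂.sum_comp fun j => M i j ^ 2

lemma frobSq_orthogonal_mul [DecidableEq m] {U : Matrix m m ℝ} (hU : Uᵀ * U = 1)
    (M : Matrix m n ℝ) : frobSq (U * M) = frobSq M := by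
  rw [frobSq_eq_trace, frobSq_eq_trace, transpose_mul, Matrix.mul_assoc,
    ← Matrix.mul_assoc Uᵀ, hU, Matrix.one_mul]

lemma frobSq_mul_orthogonal_transpose [DecidableEq n] {V : Matrix n n ℝ} (hV : Vᵀ * V = 1)
    (M : Matrix m n ℝ) : frobSq (M * Vᵀ) = frobSq M := by
  rw [← frobSq_transpose, transpose_mul, transpose_transpose, frobSq_orthogonal_mul hV,
    frobSq_transpose]

lemma frobSq_diagonal_mul_le [DecidableEq m] {d : m → ℝ} (hd : ∀ i, d i ^ 2 ≤ 1)
    (M : Matrix m n ℝ) : frobSq (diagonal d * M) ≤ frobSq M := by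
  refine Finset.sum_le_sum fun i _ => Finset.sum_le_sum fun j _ => ?_
  rw [diagonal_mul, mul_pow]
  exact mul_le_of_le_one_left (sq_nonneg _) (hd i)

lemma frobSq_mul_submatrix_sub {n' : Type*} [Fintype n'] (A : Matrix m m ℝ) (M : Matrix m n ℝ)
    (e : n' ≃ n) :
    frobSq (A * M.submatrix id e - M.submatrix id e) = frobSq (A * M - M) :=
  frobSq_submatrix (A * M - M) (Equiv.refl m) e

attribute [local instance] frobeniusNormedAddCommGroup in
lemma sqrt_frobSq_eq_norm (M : Matrix m n ℝ) : √(frobSq M) = ‖M‖ := by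
  rw [frobenius_norm_def, Real.sqrt_eq_rpow, frobSq]
  simp only [Real.norm_eq_abs, Real.rpow_two, sq_abs]

attribute [local instance] frobeniusNormedAddCommGroup in
lemma sqrt_frobSq_add_le (M N : Matrix m n ℝ) :
    √(frobSq (M + N)) ≤ √(frobSq M) + √(frobSq N) := by
  simpa only [sqrt_frobSq_eq_norm] using norm_add_le M N

end Frobenius

def singularDiag (m n : ℕ) (σ : ℕ → ℝ) : Matrix (Fin m) (Fin n) ℝ :=
  of fun i j => if (i : ℕ) = (j : ℕ) then σ i else 0

def truncInvDiag (m n : ℕ) (τ : ℝ) (σ : ℕ → ℝ) : Matrix (Fin n) (Fin m) ℝ :=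
  of fun j i => if (j : ℕ) = (i : ℕ) ∧ τ < σ i then (σ i)⁻¹ else 0

def keptIndicator (m n : ℕ) (τ : ℝ) (σ : ℕ → ℝ) (i : Fin m) : ℝ :=
  if (i : ℕ) < n ∧ τ < σ i then 1 else 0

lemma keptIndicator_sq_le_one (m n : ℕ) (τ : ℝ) (σ : ℕ → ℝ) (i : Fin m) :
    keptIndicator m n τ σ i ^ 2 ≤ 1 := by
  unfold keptIndicator
  split_ifs <;> norm_num

lemma singularDiag_mul_truncInvDiag {m n : ℕ} {τ : ℝ} (hτ : 0 ≤ τ) (σ : ℕ → ℝ) :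
    singularDiag m n σ * truncInvDiag m n τ σ = diagonal (keptIndicator m n τ σ) := by
  ext i i'
  simp only [mul_apply, singularDiag, truncInvDiag, of_apply, ite_mul, zero_mul]
  rw [Fin.sum_ite_val_eq (i : ℕ) fun j =>
    σ i * if j = (i' : ℕ) ∧ τ < σ i' then (σ i')⁻¹ else 0]
  by_cases hii' : i = i'
  · subst hii'
    by_cases hσ : τ < σ i
    · simp [keptIndicator, hσ, mul_inv_cancel₀ (hτ.trans_lt hσ).ne']
    · simp [keptIndicator, hσ]
  · simp [hii', Fin.val_ne_of_ne hii']

lemma frobSq_keptIndicator_mul_singularDiag_sub_le {m n : ℕ} {τ : ℝ} {σ : ℕ → ℝ}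
    (hσ : ∀ i, 0 ≤ σ i) :
    frobSq (diagonal (keptIndicator m n τ σ) * singularDiag m n σ - singularDiag m n σ)
      ≤ m * τ ^ 2 := by
  have hrow : ∀ i : Fin m,
      ∑ j, ((diagonal (keptIndicator m n τ σ) * singularDiag m n σ - singularDiag m n σ) i j) ^ 2
        ≤ τ ^ 2 := by
    intro i
    have hentry : ∀ j : Fin n,
        (keptIndicator m n τ σ i * singularDiag m n σ i j - singularDiag m n σ i j) ^ 2
          = if (i : ℕ) = j then ((keptIndicator m n τ σ i - 1) * σ i) ^ 2 else 0 := by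
      intro j
      by_cases hij : (i : ℕ) = j <;> simp only [singularDiag, of_apply, hij, if_true, if_false] <;>
        ring
    simp only [sub_apply, diagonal_mul, hentry]
    rw [Fin.sum_ite_val_eq (i : ℕ) fun _ => ((keptIndicator m n τ σ i - 1) * σ i) ^ 2]
    unfold keptIndicator
    split_ifs with hi hkept
    · simp [sq_nonneg]
    · simp only [not_and, not_lt] at hkept
      simpa using pow_le_pow_left₀ (hσ i) (hkept hi) 2
    · positivity
  refine (Finset.sum_le_sum fun i _ => hrow i).trans ?_
  simp

section TruncatedProjector

variable {m n : ℕ} {τ : ℝ} {σ : ℕ → ℝ} {U : Matrix (Fin m) (Fin m) ℝ}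
  {V : Matrix (Fin n) (Fin n) ℝ} {A : Matrix (Fin m) (Fin n) ℝ} {P : Matrix (Fin n) (Fin m) ℝ}

lemma mul_truncPinv_eq (hτ : 0 ≤ τ) (hV : Vᵀ * V = 1) (hA : A = U * singularDiag m n σ * Vᵀ)
    (hP : P = V * truncInvDiag m n τ σ * Uᵀ) :
    A * P = U * diagonal (keptIndicator m n τ σ) * Uᵀ := by
  rw [hA, hP, ← singularDiag_mul_truncInvDiag hτ σ]
  simp only [Matrix.mul_assoc]
  rw [← Matrix.mul_assoc Vᵀ, hV, Matrix.one_mul]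

lemma frobSq_mul_truncPinv_mul_le {κ : Type*} [Fintype κ] (hτ : 0 ≤ τ) (hU : Uᵀ * U = 1)
    (hV : Vᵀ * V = 1) (hA : A = U * singularDiag m n σ * Vᵀ)
    (hP : P = V * truncInvDiag m n τ σ * Uᵀ) (M : Matrix (Fin m) κ ℝ) :
    frobSq (A * P * M) ≤ frobSq M := by
  have hUt : Uᵀᵀ * Uᵀ = 1 := by rw [transpose_transpose, mul_eq_one_comm.mp hU]
  calc frobSq (A * P * M) = frobSq (diagonal (keptIndicator m n τ σ) * (Uᵀ * M)) := by
        rw [mul_truncPinv_eq hτ hV hA hP, Matrix.mul_assoc, Matrix.mul_assoc,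
          frobSq_orthogonal_mul hU]
    _ ≤ frobSq (Uᵀ * M) := frobSq_diagonal_mul_le (keptIndicator_sq_le_one m n τ σ) _
    _ = frobSq M := frobSq_orthogonal_mul hUt M

lemma frobSq_mul_truncPinv_mul_sub_le (hτ : 0 ≤ τ) (hσ : ∀ i, 0 ≤ σ i) (hU : Uᵀ * U = 1)
    (hV : Vᵀ * V = 1) (hA : A = U * singularDiag m n σ * Vᵀ)
    (hP : P = V * truncInvDiag m n τ σ * Uᵀ) :
    frobSq (A * P * A - A) ≤ m * τ ^ 2 := by
  have hres : A * P * A - A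
      = U * (diagonal (keptIndicator m n τ σ) * singularDiag m n σ - singularDiag m n σ) * Vᵀ := by
    rw [mul_truncPinv_eq hτ hV hA hP, hA]
    simp only [Matrix.mul_sub, Matrix.sub_mul, Matrix.mul_assoc]
    rw [← Matrix.mul_assoc Uᵀ, hU, Matrix.one_mul]
  rw [hres, frobSq_mul_orthogonal_transpose hV, frobSq_orthogonal_mul hU]
  exact frobSq_keptIndicator_mul_singularDiag_sub_le hσ

end TruncatedProjector

end Matrix

namespace Tensor3

variable {ι₁ ι₂ ι₃ κ : Type*}

def sqNorm [Fintype ι₁] [Fintype ι₂] [Fintype ι₃] (T : ι₁ → ι₂ → ι₃ → ℝ) : ℝ :=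
  ∑ i, ∑ j, ∑ k, T i j k ^ 2

def mode1 [Fintype ι₁] (A : Matrix κ ι₁ ℝ) (T : ι₁ → ι₂ → ι₃ → ℝ) : κ → ι₂ → ι₃ → ℝ :=
  fun i j k => ∑ i', A i i' * T i' j k

def mode2 [Fintype ι₂] (B : Matrix κ ι₂ ℝ) (T : ι₁ → ι₂ → ι₃ → ℝ) : ι₁ → κ → ι₃ → ℝ :=
  fun i j k => ∑ j', B j j' * T i j' k

def mode3 [Fintype ι₃] (C : Matrix κ ι₃ ℝ) (T : ι₁ → ι₂ → ι₃ → ℝ) : ι₁ → ι₂ → κ → ℝ :=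
  fun i j k => ∑ k', C k k' * T i j k'

def unfold1 (T : ι₁ → ι₂ → ι₃ → ℝ) : Matrix ι₁ (ι₂ × ι₃) ℝ := of fun i jk => T i jk.1 jk.2

def unfold2 (T : ι₁ → ι₂ → ι₃ → ℝ) : Matrix ι₂ (ι₁ × ι₃) ℝ := of fun j ik => T ik.1 j ik.2

def unfold3 (T : ι₁ → ι₂ → ι₃ → ℝ) : Matrix ι₃ (ι₁ × ι₂) ℝ := of fun k ij => T ij.1 ij.2 k

lemma unfold1_sub (X Y : ι₁ → ι₂ → ι₃ → ℝ) : unfold1 (X - Y) = unfold1 X - unfold1 Y := rfl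

lemma unfold2_sub (X Y : ι₁ → ι₂ → ι₃ → ℝ) : unfold2 (X - Y) = unfold2 X - unfold2 Y := rfl

lemma unfold3_sub (X Y : ι₁ → ι₂ → ι₃ → ℝ) : unfold3 (X - Y) = unfold3 X - unfold3 Y := rfl

lemma unfold1_mode1 [Fintype ι₁] (A : Matrix κ ι₁ ℝ) (T : ι₁ → ι₂ → ι₃ → ℝ) :
    unfold1 (mode1 A T) = A * unfold1 T := by
  ext i jk
  simp [unfold1, mode1, mul_apply]

lemma unfold2_mode2 [Fintype ι₂] (B : Matrix κ ι₂ ℝ) (T : ι₁ → ι₂ → ι₃ → ℝ) :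
    unfold2 (mode2 B T) = B * unfold2 T := by
  ext j ik
  simp [unfold2, mode2, mul_apply]

lemma unfold3_mode3 [Fintype ι₃] (C : Matrix κ ι₃ ℝ) (T : ι₁ → ι₂ → ι₃ → ℝ) :
    unfold3 (mode3 C T) = C * unfold3 T := by
  ext k ij
  simp [unfold3, mode3, mul_apply]

section SqNorm

variable [Fintype ι₁] [Fintype ι₂] [Fintype ι₃]

lemma sqNorm_eq_frobSq_unfold1 (T : ι₁ → ι₂ → ι₃ → ℝ) : sqNorm T = frobSq (unfold1 T) := by
  simp only [sqNorm, frobSq, unfold1, of_apply, Fintype.sum_prod_type]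

lemma sqNorm_eq_frobSq_unfold2 (T : ι₁ → ι₂ → ι₃ → ℝ) : sqNorm T = frobSq (unfold2 T) := by
  simp only [sqNorm, frobSq, unfold2, of_apply, Fintype.sum_prod_type]
  exact Finset.sum_comm

lemma sqNorm_eq_frobSq_unfold3 (T : ι₁ → ι₂ → ι₃ → ℝ) : sqNorm T = frobSq (unfold3 T) := by
  simp only [sqNorm, frobSq, unfold3, of_apply, Fintype.sum_prod_type]
  calc _ = ∑ i, ∑ k, ∑ j, T i j k ^ 2 := Finset.sum_congr rfl fun i _ => Finset.sum_comm
    _ = _ := Finset.sum_comm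

lemma sqrt_sqNorm_add_le (X Y : ι₁ → ι₂ → ι₃ → ℝ) :
    √(sqNorm (X + Y)) ≤ √(sqNorm X) + √(sqNorm Y) := by
  rw [sqNorm_eq_frobSq_unfold1, sqNorm_eq_frobSq_unfold1 X, sqNorm_eq_frobSq_unfold1 Y]
  exact sqrt_frobSq_add_le (unfold1 X) (unfold1 Y)

end SqNorm

lemma mode2_sub [Fintype ι₂] (B : Matrix κ ι₂ ℝ) (X Y : ι₁ → ι₂ → ι₃ → ℝ) :
    mode2 B (X - Y) = mode2 B X - mode2 B Y := by
  ext i j k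
  simp [mode2, mul_sub, Finset.sum_sub_distrib]

lemma mode3_sub [Fintype ι₃] (C : Matrix κ ι₃ ℝ) (X Y : ι₁ → ι₂ → ι₃ → ℝ) :
    mode3 C (X - Y) = mode3 C X - mode3 C Y := by
  ext i j k
  simp [mode3, mul_sub, Finset.sum_sub_distrib]

section Commute

variable {κ₁ κ₂ κ₃ : Type*}

lemma mode1_mode2_comm [Fintype ι₁] [Fintype ι₂] (A : Matrix κ₁ ι₁ ℝ) (B : Matrix κ₂ ι₂ ℝ)
    (T : ι₁ → ι₂ → ι₃ → ℝ) : mode1 A (mode2 B T) = mode2 B (mode1 A T) := by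
  ext i j k
  simp only [mode1, mode2, Finset.mul_sum, mul_left_comm (A _ _)]
  exact Finset.sum_comm

lemma mode1_mode3_comm [Fintype ι₁] [Fintype ι₃] (A : Matrix κ₁ ι₁ ℝ) (C : Matrix κ₃ ι₃ ℝ)
    (T : ι₁ → ι₂ → ι₃ → ℝ) : mode1 A (mode3 C T) = mode3 C (mode1 A T) := by
  ext i j k
  simp only [mode1, mode3, Finset.mul_sum, mul_left_comm (A _ _)]
  exact Finset.sum_comm

lemma mode2_mode3_comm [Fintype ι₂] [Fintype ι₃] (B : Matrix κ₂ ι₂ ℝ) (C : Matrix κ₃ ι₃ ℝ)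
    (T : ι₁ → ι₂ → ι₃ → ℝ) : mode2 B (mode3 C T) = mode3 C (mode2 B T) := by
  ext i j k
  simp only [mode2, mode3, Finset.mul_sum, mul_left_comm (B _ _)]
  exact Finset.sum_comm

end Commute

variable [Fintype ι₁] [Fintype ι₂] [Fintype ι₃]

lemma mode123_sub_eq (Q₁ : Matrix ι₁ ι₁ ℝ) (Q₂ : Matrix ι₂ ι₂ ℝ) (Q₃ : Matrix ι₃ ι₃ ℝ)
    (T : ι₁ → ι₂ → ι₃ → ℝ) :
    mode1 Q₁ (mode2 Q₂ (mode3 Q₃ T)) - T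
      = mode2 Q₂ (mode3 Q₃ (mode1 Q₁ T - T)) + mode3 Q₃ (mode2 Q₂ T - T)
        + (mode3 Q₃ T - T) := by
  rw [mode3_sub, mode2_sub, mode3_sub, ← mode1_mode3_comm, ← mode1_mode2_comm,
    ← mode2_mode3_comm]
  abel

lemma sqrt_sqNorm_mode123_sub_le (Q₁ : Matrix ι₁ ι₁ ℝ) (Q₂ : Matrix ι₂ ι₂ ℝ)
    (Q₃ : Matrix ι₃ ι₃ ℝ) (T : ι₁ → ι₂ → ι₃ → ℝ)
    (hQ₂ : ∀ X : ι₁ → ι₂ → ι₃ → ℝ, sqNorm (mode2 Q₂ X) ≤ sqNorm X)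
    (hQ₃ : ∀ X : ι₁ → ι₂ → ι₃ → ℝ, sqNorm (mode3 Q₃ X) ≤ sqNorm X) :
    √(sqNorm (mode1 Q₁ (mode2 Q₂ (mode3 Q₃ T)) - T))
      ≤ √(sqNorm (mode1 Q₁ T - T)) + √(sqNorm (mode2 Q₂ T - T)) + √(sqNorm (mode3 Q₃ T - T)) := by
  rw [mode123_sub_eq]
  refine (sqrt_sqNorm_add_le _ _).trans (add_le_add_left ?_ _)
  refine (sqrt_sqNorm_add_le _ _).trans (add_le_add (Real.sqrt_le_sqrt ?_) (Real.sqrt_le_sqrt ?_))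
  · exact (hQ₂ _).trans (hQ₃ _)
  · exact hQ₃ _

lemma sqNorm_mode2_le {B : Matrix ι₂ ι₂ ℝ}
    (hB : ∀ M : Matrix ι₂ (ι₁ × ι₃) ℝ, frobSq (B * M) ≤ frobSq M) (X : ι₁ → ι₂ → ι₃ → ℝ) :
    sqNorm (mode2 B X) ≤ sqNorm X := by
  rw [sqNorm_eq_frobSq_unfold2, unfold2_mode2, sqNorm_eq_frobSq_unfold2 X]
  exact hB _

lemma sqNorm_mode3_le {C : Matrix ι₃ ι₃ ℝ}
    (hC : ∀ M : Matrix ι₃ (ι₁ × ι₂) ℝ, frobSq (C * M) ≤ frobSq M) (X : ι₁ → ι₂ → ι₃ → ℝ) :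
    sqNorm (mode3 C X) ≤ sqNorm X := by
  rw [sqNorm_eq_frobSq_unfold3, unfold3_mode3, sqNorm_eq_frobSq_unfold3 X]
  exact hC _

lemma sqNorm_mode1_sub_eq_frobSq [Fintype κ] (A : Matrix ι₁ ι₁ ℝ) {T : ι₁ → ι₂ → ι₃ → ℝ}
    {M : Matrix ι₁ κ ℝ} (e : ι₂ × ι₃ ≃ κ) (hM : ∀ i j k, M i (e (j, k)) = T i j k) :
    sqNorm (mode1 A T - T) = frobSq (A * M - M) := by
  have hunfold : unfold1 T = M.submatrix id e := by
    ext i ⟨j, k⟩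
    exact (hM i j k).symm
  rw [sqNorm_eq_frobSq_unfold1, unfold1_sub, unfold1_mode1, hunfold, frobSq_mul_submatrix_sub]

lemma sqNorm_mode2_sub_eq_frobSq [Fintype κ] (B : Matrix ι₂ ι₂ ℝ) {T : ι₁ → ι₂ → ι₃ → ℝ}
    {M : Matrix ι₂ κ ℝ} (e : ι₁ × ι₃ ≃ κ) (hM : ∀ i j k, M j (e (i, k)) = T i j k) :
    sqNorm (mode2 B T - T) = frobSq (B * M - M) := by
  have hunfold : unfold2 T = M.submatrix id e := by
    ext j ⟨i, k⟩
    exact (hM i j k).symm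
  rw [sqNorm_eq_frobSq_unfold2, unfold2_sub, unfold2_mode2, hunfold, frobSq_mul_submatrix_sub]

lemma sqNorm_mode3_sub_eq_frobSq [Fintype κ] (C : Matrix ι₃ ι₃ ℝ) {T : ι₁ → ι₂ → ι₃ → ℝ}
    {M : Matrix ι₃ κ ℝ} (e : ι₁ × ι₂ ≃ κ) (hM : ∀ i j k, M k (e (i, j)) = T i j k) :
    sqNorm (mode3 C T - T) = frobSq (C * M - M) := by
  have hunfold : unfold3 T = M.submatrix id e := by
    ext k ⟨i, j⟩
    exact (hM i j k).symm
  rw [sqNorm_eq_frobSq_unfold3, unfold3_sub, unfold3_mode3, hunfold, frobSq_mul_submatrix_sub]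

end Tensor3

end

open Tensor3

theorem lemma1_perturbed_general (R1 R2 R3 : ℕ) (τ : ℝ) (hτ0 : 0 ≤ τ)
    (W : Fin R1 → Fin R2 → Fin R3 → ℝ)
    -- mode-n unfoldings
    (W1 : Matrix (Fin R1) (Fin (R2 * R3)) ℝ)
    (hW1 : ∀ i j k, W1 i (finProdFinEquiv (j, k)) = W i j k)
    (W2 : Matrix (Fin R2) (Fin (R1 * R3)) ℝ)
    (hW2 : ∀ i j k, W2 j (finProdFinEquiv (i, k)) = W i j k)
    (W3 : Matrix (Fin R3) (Fin (R1 * R2)) ℝ)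
    (hW3 : ∀ i j k, W3 k (finProdFinEquiv (i, j)) = W i j k)
    -- SVDs of the unfoldings
    (U1 : Matrix (Fin R1) (Fin R1) ℝ) (V1 : Matrix (Fin (R2 * R3)) (Fin (R2 * R3)) ℝ)
    (hU1 : U1ᵀ * U1 = 1) (hV1 : V1ᵀ * V1 = 1)
    (σ1 : ℕ → ℝ) (hσ1 : ∀ i, 0 ≤ σ1 i)
    (hsvd1 : W1 = U1 * Matrix.of (fun (i : Fin R1) (j : Fin (R2 * R3)) =>
      if (i : ℕ) = (j : ℕ) then σ1 (i : ℕ) else 0) * V1ᵀ)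
    (U2 : Matrix (Fin R2) (Fin R2) ℝ) (V2 : Matrix (Fin (R1 * R3)) (Fin (R1 * R3)) ℝ)
    (hU2 : U2ᵀ * U2 = 1) (hV2 : V2ᵀ * V2 = 1)
    (σ2 : ℕ → ℝ) (hσ2 : ∀ i, 0 ≤ σ2 i)
    (hsvd2 : W2 = U2 * Matrix.of (fun (i : Fin R2) (j : Fin (R1 * R3)) =>
      if (i : ℕ) = (j : ℕ) then σ2 (i : ℕ) else 0) * V2ᵀ)
    (U3 : Matrix (Fin R3) (Fin R3) ℝ) (V3 : Matrix (Fin (R1 * R2)) (Fin (R1 * R2)) ℝ)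
    (hU3 : U3ᵀ * U3 = 1) (hV3 : V3ᵀ * V3 = 1)
    (σ3 : ℕ → ℝ) (hσ3 : ∀ i, 0 ≤ σ3 i)
    (hsvd3 : W3 = U3 * Matrix.of (fun (i : Fin R3) (j : Fin (R1 * R2)) =>
      if (i : ℕ) = (j : ℕ) then σ3 (i : ℕ) else 0) * V3ᵀ)
    -- τ-truncated pseudo-inverses
    (P1 : Matrix (Fin (R2 * R3)) (Fin R1) ℝ)
    (hP1 : P1 = V1 * Matrix.of (fun (j : Fin (R2 * R3)) (i : Fin R1) =>
      if (j : ℕ) = (i : ℕ) ∧ τ < σ1 (i : ℕ) then (σ1 (i : ℕ))⁻¹ else 0) * U1ᵀ)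
    (P2 : Matrix (Fin (R1 * R3)) (Fin R2) ℝ)
    (hP2 : P2 = V2 * Matrix.of (fun (j : Fin (R1 * R3)) (i : Fin R2) =>
      if (j : ℕ) = (i : ℕ) ∧ τ < σ2 (i : ℕ) then (σ2 (i : ℕ))⁻¹ else 0) * U2ᵀ)
    (P3 : Matrix (Fin (R1 * R2)) (Fin R3) ℝ)
    (hP3 : P3 = V3 * Matrix.of (fun (j : Fin (R1 * R2)) (i : Fin R3) =>
      if (j : ℕ) = (i : ℕ) ∧ τ < σ3 (i : ℕ) then (σ3 (i : ℕ))⁻¹ else 0) * U3ᵀ) :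
    ∃ H : Fin R1 → Fin R2 → Fin R3 → ℝ,
      (∀ i j k,
        (∑ i', (W1 * P1) i i' * ∑ j', (W2 * P2) j j' * ∑ k', (W3 * P3) k k' * W i' j' k')
          = W i j k + H i j k) ∧
      Real.sqrt (∑ i, ∑ j, ∑ k, (H i j k) ^ 2)
        ≤ (Real.sqrt R1 + Real.sqrt R2 + Real.sqrt R3) * τ := by
  have hres₁ : √(sqNorm (mode1 (W1 * P1) W - W)) ≤ √R1 * τ := by
    rw [sqNorm_mode1_sub_eq_frobSq _ finProdFinEquiv hW1]
    exact Real.sqrt_le_sqrt_mul_of_le_mul_sq hτ0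
      (frobSq_mul_truncPinv_mul_sub_le hτ0 hσ1 hU1 hV1 hsvd1 hP1)
  have hres₂ : √(sqNorm (mode2 (W2 * P2) W - W)) ≤ √R2 * τ := by
    rw [sqNorm_mode2_sub_eq_frobSq _ finProdFinEquiv hW2]
    exact Real.sqrt_le_sqrt_mul_of_le_mul_sq hτ0
      (frobSq_mul_truncPinv_mul_sub_le hτ0 hσ2 hU2 hV2 hsvd2 hP2)
  have hres₃ : √(sqNorm (mode3 (W3 * P3) W - W)) ≤ √R3 * τ := by
    rw [sqNorm_mode3_sub_eq_frobSq _ finProdFinEquiv hW3]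
    exact Real.sqrt_le_sqrt_mul_of_le_mul_sq hτ0
      (frobSq_mul_truncPinv_mul_sub_le hτ0 hσ3 hU3 hV3 hsvd3 hP3)
  refine ⟨mode1 (W1 * P1) (mode2 (W2 * P2) (mode3 (W3 * P3) W)) - W,
    fun i j k => (add_sub_cancel (W i j k) _).symm, ?_⟩
  calc _ ≤ _ := sqrt_sqNorm_mode123_sub_le _ _ _ W
        (sqNorm_mode2_le fun M => frobSq_mul_truncPinv_mul_le hτ0 hU2 hV2 hsvd2 hP2 M)
        (sqNorm_mode3_le fun M => frobSq_mul_truncPinv_mul_le hτ0 hU3 hV3 hsvd3 hP3 M)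
    _ ≤ √R1 * τ + √R2 * τ + √R3 * τ := by gcongr
    _ = _ := by ring

/-- perturbed case of Lemma 1: if τ exceeds every smallest positive singular
value of the unfoldings, the multi-way projection equals W + H with ‖H‖_F ≤ (√R1+√R2+√R3)τ. -/
theorem lemma1_perturbed (R1 R2 R3 : ℕ) (τ σR1 σR2 σR3 : ℝ) (hτ0 : 0 ≤ τ)
    (W : Fin R1 → Fin R2 → Fin R3 → ℝ)
    -- mode-n unfoldings
    (W1 : Matrix (Fin R1) (Fin (R2 * R3)) ℝ)
    (hW1 : ∀ i j k, W1 i (finProdFinEquiv (j, k)) = W i j k)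
    (W2 : Matrix (Fin R2) (Fin (R1 * R3)) ℝ)
    (hW2 : ∀ i j k, W2 j (finProdFinEquiv (i, k)) = W i j k)
    (W3 : Matrix (Fin R3) (Fin (R1 * R2)) ℝ)
    (hW3 : ∀ i j k, W3 k (finProdFinEquiv (i, j)) = W i j k)
    -- SVDs of the unfoldings
    (U1 : Matrix (Fin R1) (Fin R1) ℝ) (V1 : Matrix (Fin (R2 * R3)) (Fin (R2 * R3)) ℝ)
    (hU1 : U1ᵀ * U1 = 1) (hV1 : V1ᵀ * V1 = 1)
    (σ1 : ℕ → ℝ) (hσ1 : ∀ i, 0 ≤ σ1 i)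
    (hsvd1 : W1 = U1 * Matrix.of (fun (i : Fin R1) (j : Fin (R2 * R3)) =>
      if (i : ℕ) = (j : ℕ) then σ1 (i : ℕ) else 0) * V1ᵀ)
    (U2 : Matrix (Fin R2) (Fin R2) ℝ) (V2 : Matrix (Fin (R1 * R3)) (Fin (R1 * R3)) ℝ)
    (hU2 : U2ᵀ * U2 = 1) (hV2 : V2ᵀ * V2 = 1)
    (σ2 : ℕ → ℝ) (hσ2 : ∀ i, 0 ≤ σ2 i)
    (hsvd2 : W2 = U2 * Matrix.of (fun (i : Fin R2) (j : Fin (R1 * R3)) =>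
      if (i : ℕ) = (j : ℕ) then σ2 (i : ℕ) else 0) * V2ᵀ)
    (U3 : Matrix (Fin R3) (Fin R3) ℝ) (V3 : Matrix (Fin (R1 * R2)) (Fin (R1 * R2)) ℝ)
    (hU3 : U3ᵀ * U3 = 1) (hV3 : V3ᵀ * V3 = 1)
    (σ3 : ℕ → ℝ) (hσ3 : ∀ i, 0 ≤ σ3 i)
    (hsvd3 : W3 = U3 * Matrix.of (fun (i : Fin R3) (j : Fin (R1 * R2)) =>
      if (i : ℕ) = (j : ℕ) then σ3 (i : ℕ) else 0) * V3ᵀ)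
    -- τ-truncated pseudo-inverses
    (P1 : Matrix (Fin (R2 * R3)) (Fin R1) ℝ)
    (hP1 : P1 = V1 * Matrix.of (fun (j : Fin (R2 * R3)) (i : Fin R1) =>
      if (j : ℕ) = (i : ℕ) ∧ τ < σ1 (i : ℕ) then (σ1 (i : ℕ))⁻¹ else 0) * U1ᵀ)
    (P2 : Matrix (Fin (R1 * R3)) (Fin R2) ℝ)
    (hP2 : P2 = V2 * Matrix.of (fun (j : Fin (R1 * R3)) (i : Fin R2) =>
      if (j : ℕ) = (i : ℕ) ∧ τ < σ2 (i : ℕ) then (σ2 (i : ℕ))⁻¹ else 0) * U2ᵀ)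
    (P3 : Matrix (Fin (R1 * R2)) (Fin R3) ℝ)
    (hP3 : P3 = V3 * Matrix.of (fun (j : Fin (R1 * R2)) (i : Fin R3) =>
      if (j : ℕ) = (i : ℕ) ∧ τ < σ3 (i : ℕ) then (σ3 (i : ℕ))⁻¹ else 0) * U3ᵀ)
    -- σRn: smallest positive singular values of the unfoldings
    (hσR1 : ∀ i, 0 < σ1 i → σR1 ≤ σ1 i)
    (hσR2 : ∀ i, 0 < σ2 i → σR2 ≤ σ2 i)
    (hσR3 : ∀ i, 0 < σ3 i → σR3 ≤ σ3 i)
    (hσR1' : ∃ i : Fin R1, ∃ j : Fin (R2 * R3), (i : ℕ) = (j : ℕ) ∧ σ1 (i : ℕ) = σR1)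
    (hσR2' : ∃ i : Fin R2, ∃ j : Fin (R1 * R3), (i : ℕ) = (j : ℕ) ∧ σ2 (i : ℕ) = σR2)
    (hσR3' : ∃ i : Fin R3, ∃ j : Fin (R1 * R2), (i : ℕ) = (j : ℕ) ∧ σ3 (i : ℕ) = σR3)
    (hτ : max (max σR1 σR2) σR3 < τ) :
    ∃ H : Fin R1 → Fin R2 → Fin R3 → ℝ,
      (∀ i j k,
        (∑ i', (W1 * P1) i i' * ∑ j', (W2 * P2) j j' * ∑ k', (W3 * P3) k k' * W i' j' k')
          = W i j k + H i j k) ∧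
      Real.sqrt (∑ i, ∑ j, ∑ k, (H i j k) ^ 2)
        ≤ (Real.sqrt R1 + Real.sqrt R2 + Real.sqrt R3) * τ :=
  lemma1_perturbed_general R1 R2 R3 τ hτ0 W W1 hW1 W2 hW2 W3 hW3 U1 V1 hU1 hV1 σ1 hσ1 hsvd1 U2 V2
    hU2 hV2 σ2 hσ2 hsvd2 U3 V3 hU3 hV3 σ3 hσ3 hsvd3 P1 hP1 P2 hP2 P3 hP3
end
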